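/- Let μ' be a 1-envy-free matching in market (N, M, u) and let T*(μ') be the stable matching obtained by finitely iterating the re-stabilization operator T starting from μ'. Then there is no stable matching μ'' with μ'' ≠ T*(μ') satisfying T*(μ') ≿ μ'' ≿ μ'. In other words, T*(μ') is the college-worst stable matching weakly preferred by all colleges to μ'. -/

import Mathlib

attribute [local instance] Classical.propDecidable

noncomputable section

/-- A many-to-one college admissions market (college admissions model) with `n`
students and `m` colleges.  Strict preferences are encoded by injective rank
functions (a smaller rank means more preferred); `none` is the outside option
`0` (being unmatched / an unfilled position). -/
structure Market (n m : ℕ) where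
  quota : Fin m → ℕ
  sRank : Fin n → Option (Fin m) → ℕ
  sRank_inj : ∀ i, Function.Injective (sRank i)
  cRank : Fin m → Option (Fin n) → ℕ
  cRank_inj : ∀ j, Function.Injective (cRank j)

namespace Market

variable {n m : ℕ}

/-- Student `i` strictly prefers `a` to `b`. -/
def sPref (M : Market n m) (i : Fin n) (a b : Option (Fin m)) : Prop :=
  M.sRank i a < M.sRank i b

/-- College `j` strictly prefers `a` to `b`. -/
def cPref (M : Market n m) (j : Fin m) (a b : Option (Fin n)) : Prop :=
  M.cRank j a < M.cRank j b

/-- The set `μ⁻¹(j)` of students matched to college `j` under `μ`. -/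
def assigned (M : Market n m) (μ : Fin n → Option (Fin m)) (j : Fin m) : Finset (Fin n) :=
  Finset.univ.filter fun i => μ i = some j

/-- `μ` is a (capacity-feasible) matching: `|μ⁻¹(j)| ≤ q_j` for every college. -/
def IsMatching (M : Market n m) (μ : Fin n → Option (Fin m)) : Prop :=
  ∀ j, (M.assigned μ j).card ≤ M.quota j

/-- Individual rationality of `μ`. -/
def IndRational (M : Market n m) (μ : Fin n → Option (Fin m)) : Prop :=
  (∀ i, ¬ M.sPref i none (μ i)) ∧
  (∀ j i', μ i' = some j → ¬ M.cPref j none (some i'))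

/-- `(i, j)` is a blocking pair for `μ`. -/
def Blocks (M : Market n m) (μ : Fin n → Option (Fin m)) (i : Fin n) (j : Fin m) : Prop :=
  M.sPref i (some j) (μ i) ∧
  (((M.assigned μ j).card < M.quota j ∧ M.cPref j (some i) none) ∨
   ((M.assigned μ j).card = M.quota j ∧ ∃ i' ∈ M.assigned μ j, M.cPref j (some i) (some i')))

/-- `μ` is stable: individually rational with no blocking pair. -/
def Stable (M : Market n m) (μ : Fin n → Option (Fin m)) : Prop :=
  M.IndRational μ ∧ ∀ i j, ¬ M.Blocks μ i j

/-- `μ` is envy-free: individually rational and any blocking pair involves an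
unmatched student. -/
def EnvyFree (M : Market n m) (μ : Fin n → Option (Fin m)) : Prop :=
  M.IndRational μ ∧ ∀ i j, M.Blocks μ i j → μ i = none

/-- `μ` is 1-envy-free: envy-free, and either stable or there is one and only
one student who belongs to every blocking pair. -/
def OneEnvyFree (M : Market n m) (μ : Fin n → Option (Fin m)) : Prop :=
  M.EnvyFree μ ∧ (M.Stable μ ∨ ∃! i : Fin n, ∀ i' j, M.Blocks μ i' j → i' = i)

/-- `(i, j)` is a student-maximal blocking pair: `j` is `i`'s most preferred
college among those with whom `i` forms a blocking pair. -/
def StudentMaxBlock (M : Market n m) (μ : Fin n → Option (Fin m)) (i : Fin n) (j : Fin m) :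
    Prop :=
  M.Blocks μ i j ∧ ∀ j', M.Blocks μ i j' → M.sRank i (some j) ≤ M.sRank i (some j')

/-- `T` is the re-stabilization operator: on a 1-envy-free matching with no
blocking pair it is the identity; otherwise it satisfies the unique
student-maximal blocking pair `(i, j)`, matching `i` to `j`, keeping everyone
not matched to `j` unchanged, keeping the students of `j` if `j` has a vacancy
or if they are not `j`'s worst current student, and unmatching `j`'s worst
current student otherwise. -/
def IsTStep (M : Market n m) (T : (Fin n → Option (Fin m)) → Fin n → Option (Fin m)) : Prop :=
  ∀ μ, M.IsMatching μ → M.OneEnvyFree μ →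
    ((∀ i j, ¬ M.Blocks μ i j) → T μ = μ) ∧
    ∀ i j, M.StudentMaxBlock μ i j →
      T μ i = some j ∧
      ∀ i', i' ≠ i →
        (μ i' ≠ some j → T μ i' = μ i') ∧
        (μ i' = some j →
          ((M.assigned μ j).card < M.quota j → T μ i' = μ i') ∧
          ((M.assigned μ j).card = M.quota j →
            ((∃ i'' ∈ M.assigned μ j, M.cPref j (some i') (some i'')) → T μ i' = μ i') ∧
            ((∀ i'' ∈ M.assigned μ j, i'' ≠ i' → M.cPref j (some i'') (some i')) →
              T μ i' = none)))

/-- `Tstar` iterates `T` finitely many times from any 1-envy-free matching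
until a fixed point of `T` is reached. -/
def IsTStarOf (M : Market n m) (T Tstar : (Fin n → Option (Fin m)) → Fin n → Option (Fin m)) :
    Prop :=
  ∀ μ, M.IsMatching μ → M.OneEnvyFree μ →
    ∃ r : ℕ, Tstar μ = T^[r] μ ∧ T (Tstar μ) = Tstar μ

/-- A one-step responsive improvement for college `j`: `A` is obtained from `B`
either by filling a vacancy with an acceptable student, or by swapping a
student of `B` for a strictly preferred outside student. -/
def SwapImproves (M : Market n m) (j : Fin m) (A B : Finset (Fin n)) : Prop :=
  (∃ i₁, i₁ ∉ B ∧ A = insert i₁ B ∧ M.cPref j (some i₁) none) ∨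
  (∃ i₁ i₂, i₂ ∈ B ∧ i₁ ∉ B ∧ A = insert i₁ (B.erase i₂) ∧ M.cPref j (some i₁) (some i₂))

/-- The responsive extension of college `j`'s strict preference to sets of
students: the transitive closure of one-step responsive improvements. -/
def SetPref (M : Market n m) (j : Fin m) (A B : Finset (Fin n)) : Prop :=
  Relation.TransGen (M.SwapImproves j) A B

/-- `μ₁ ≿ μ₂`: every college either gets the same set of students or a
strictly (responsively) preferred set. -/
def CollegesWeakPref (M : Market n m) (μ₁ μ₂ : Fin n → Option (Fin m)) : Prop :=
  ∀ j, M.assigned μ₁ j = M.assigned μ₂ j ∨ M.SetPref j (M.assigned μ₁ j) (M.assigned μ₂ j)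

/-- `μ` is the student-optimal stable matching: a stable matching that every
student weakly prefers to any other stable matching. -/
def IsSOSM (M : Market n m) (μ : Fin n → Option (Fin m)) : Prop :=
  M.IsMatching μ ∧ M.Stable μ ∧
    ∀ μ', M.IsMatching μ' → M.Stable μ' → ∀ i, M.sRank i (μ i) ≤ M.sRank i (μ' i)

/-- `μ` (with student `i` unmatched) is a stable matching of the market in
which student `i` has been removed. -/
def StableAway (M : Market n m) (i : Fin n) (μ : Fin n → Option (Fin m)) : Prop :=
  μ i = none ∧
  (∀ i', i' ≠ i → ¬ M.sPref i' none (μ i')) ∧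
  (∀ j i', i' ≠ i → μ i' = some j → ¬ M.cPref j none (some i')) ∧
  (∀ i' j, i' ≠ i → ¬ M.Blocks μ i' j)

/-- `μ` (with student `i` unmatched) is the student-optimal stable matching of
the market in which student `i` has been removed. -/
def IsSOSMAway (M : Market n m) (i : Fin n) (μ : Fin n → Option (Fin m)) : Prop :=
  M.IsMatching μ ∧ M.StableAway i μ ∧
    ∀ μ', M.IsMatching μ' → M.StableAway i μ' →
      ∀ i', i' ≠ i → M.sRank i' (μ i') ≤ M.sRank i' (μ' i')

/-- The maximum rank difference `h(w)` among the colleges' preferences: the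
largest rank gap `|w_j(i₁) − w_j(i₂)|` over colleges `j` and pairs `(i₁, i₂)`
on whose relative ranking at least two colleges disagree (`0` if there is no
disagreement). -/
def maxRankDiff (M : Market n m) : ℕ :=
  Finset.univ.sup fun j : Fin m =>
    (Finset.univ.filter fun q : Option (Fin n) × Option (Fin n) =>
        ∃ j₁ j₂ : Fin m, M.cPref j₁ q.1 q.2 ∧ M.cPref j₂ q.2 q.1).sup
      fun q => ((M.cRank j q.1 : ℤ) - (M.cRank j q.2 : ℤ)).natAbs

/-- `N*_{j,1}(μ) = μ⁻¹(j) \ μ*⁻¹(j)` : students of `j` under `μ` but not `μs`. -/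
def Nset1 (M : Market n m) (μ μs : Fin n → Option (Fin m)) (j : Fin m) : Finset (Fin n) :=
  M.assigned μ j \ M.assigned μs j

/-- `N*_{j,0}(μ) = μ*⁻¹(j) \ μ⁻¹(j)` : students of `j` under `μs` but not `μ`. -/
def Nset0 (M : Market n m) (μ μs : Fin n → Option (Fin m)) (j : Fin m) : Finset (Fin n) :=
  M.assigned μs j \ M.assigned μ j

/-- The rank `r_{j,i}(A)` of student `i` within the set `A` according to `≻_j`. -/
def rankIn (M : Market n m) (j : Fin m) (i : Fin n) (A : Finset (Fin n)) : ℕ :=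
  (A.filter fun i' => M.cPref j (some i') (some i)).card + 1

/-- `a ▷_j b`: student `a` displaces student `b` from college `j` (as we move
from the SOSM `μs` to the stable matching `μ`). -/
def Displaces (M : Market n m) (μ μs : Fin n → Option (Fin m)) (j : Fin m) (a b : Fin n) :
    Prop :=
  a ∈ M.Nset1 μ μs j ∧ b ∈ M.Nset0 μ μs j ∧
    M.rankIn j a (M.Nset1 μ μs j) = M.rankIn j b (M.Nset0 μ μs j)

/-- `a ▷ b`: `a` displaces `b` from some college. -/
def DisplacesAny (M : Market n m) (μ μs : Fin n → Option (Fin m)) (a b : Fin n) : Prop :=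
  ∃ j, M.Displaces μ μs j a b

/-- The positions of the related one-to-one market: college `j` is split into
`q_j` ordered positions. -/
abbrev Position (M : Market n m) : Type := (j : Fin m) × Fin (M.quota j)

/-- Student `i`'s strict preference over positions in the related one-to-one
market: positions of strictly better colleges are better, and within a college
a smaller index is better. -/
def PosBetter (M : Market n m) (i : Fin n) :
    Option (Position M) → Option (Position M) → Prop
  | some q, some q' =>
      M.sRank i (some q.1) < M.sRank i (some q'.1) ∨ (q.1 = q'.1 ∧ (q.2 : ℕ) < (q'.2 : ℕ))
  | some q, none => M.sRank i (some q.1) < M.sRank i none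
  | none, some q' => M.sRank i none < M.sRank i (some q'.1)
  | none, none => False

/-- `(μN, μM)` is the one-to-one matching of the related market corresponding
to the many-to-one matching `μ`: the students of `μ⁻¹(j)` occupy, in the order
of college `j`'s preference, the ordered positions of `j`. -/
def Corresponds (M : Market n m) (μ : Fin n → Option (Fin m))
    (μN : Fin n → Option (Position M)) (μM : Position M → Option (Fin n)) : Prop :=
  (∀ i p, μN i = some p ↔ μM p = some i) ∧
  (∀ i j, (∃ s, μN i = some ⟨j, s⟩) ↔ μ i = some j) ∧
  (∀ i j (s : Fin (M.quota j)), μN i = some ⟨j, s⟩ →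
    (s : ℕ) = ((M.assigned μ j).filter fun i' => M.cPref j (some i') (some i)).card)

/-- `(i, p)` is a blocking pair in the related one-to-one market. -/
def PosBlocks (M : Market n m) (μN : Fin n → Option (Position M))
    (μM : Position M → Option (Fin n)) (i : Fin n) (p : Position M) : Prop :=
  M.PosBetter i (some p) (μN i) ∧ M.cPref p.1 (some i) (μM p)

/-- Individual rationality in the related one-to-one market. -/
def PosIR (M : Market n m) (μN : Fin n → Option (Position M))
    (μM : Position M → Option (Fin n)) : Prop :=
  (∀ i, ¬ M.PosBetter i none (μN i)) ∧ (∀ p : Position M, ¬ M.cPref p.1 none (μM p))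

/-- Stability in the related one-to-one market. -/
def PosStable (M : Market n m) (μN : Fin n → Option (Position M))
    (μM : Position M → Option (Fin n)) : Prop :=
  M.PosIR μN μM ∧ ∀ i p, ¬ M.PosBlocks μN μM i p

/-- Simplicity in the related one-to-one market: individually rational and any
blocking pair involves an unmatched student. -/
def PosSimple (M : Market n m) (μN : Fin n → Option (Position M))
    (μM : Position M → Option (Fin n)) : Prop :=
  M.PosIR μN μM ∧ ∀ i p, M.PosBlocks μN μM i p → μN i = none

/-- 1-simplicity in the related one-to-one market: simple, and either stable or
there is one and only one student belonging to every blocking pair. -/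
def PosOneSimple (M : Market n m) (μN : Fin n → Option (Position M))
    (μM : Position M → Option (Fin n)) : Prop :=
  M.PosSimple μN μM ∧
    (M.PosStable μN μM ∨ ∃! i : Fin n, ∀ i' p, M.PosBlocks μN μM i' p → i' = i)

end Market

/-- A generic one-to-one matching market with `n` students and `p` positions,
with strict preferences encoded by injective rank functions. -/
structure OOMarket (n p : ℕ) where
  sRank : Fin n → Option (Fin p) → ℕ
  sRank_inj : ∀ i, Function.Injective (sRank i)
  pRank : Fin p → Option (Fin n) → ℕ
  pRank_inj : ∀ c, Function.Injective (pRank c)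

namespace OOMarket

variable {n p : ℕ}

/-- `(μN, μM)` is a one-to-one matching. -/
def IsOOMatching (O : OOMarket n p) (μN : Fin n → Option (Fin p))
    (μM : Fin p → Option (Fin n)) : Prop :=
  ∀ i c, μN i = some c ↔ μM c = some i

/-- `(i, c)` is a blocking pair for `(μN, μM)`. -/
def OOBlocks (O : OOMarket n p) (μN : Fin n → Option (Fin p))
    (μM : Fin p → Option (Fin n)) (i : Fin n) (c : Fin p) : Prop :=
  O.sRank i (some c) < O.sRank i (μN i) ∧ O.pRank c (some i) < O.pRank c (μM c)

/-- Individual rationality. -/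
def OOIR (O : OOMarket n p) (μN : Fin n → Option (Fin p))
    (μM : Fin p → Option (Fin n)) : Prop :=
  (∀ i, ¬ O.sRank i none < O.sRank i (μN i)) ∧ (∀ c, ¬ O.pRank c none < O.pRank c (μM c))

/-- Stability. -/
def OOStable (O : OOMarket n p) (μN : Fin n → Option (Fin p))
    (μM : Fin p → Option (Fin n)) : Prop :=
  O.OOIR μN μM ∧ ∀ i c, ¬ O.OOBlocks μN μM i c

/-- Simplicity: individually rational and every blocking pair involves an
unmatched student. -/
def OOSimple (O : OOMarket n p) (μN : Fin n → Option (Fin p))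
    (μM : Fin p → Option (Fin n)) : Prop :=
  O.OOIR μN μM ∧ ∀ i c, O.OOBlocks μN μM i c → μN i = none

/-- 1-simplicity: simple, and either stable or there is one and only one
student belonging to every blocking pair. -/
def OOOneSimple (O : OOMarket n p) (μN : Fin n → Option (Fin p))
    (μM : Fin p → Option (Fin n)) : Prop :=
  O.OOSimple μN μM ∧
    (O.OOStable μN μM ∨ ∃! i : Fin n, ∀ i' c, O.OOBlocks μN μM i' c → i' = i)

end OOMarket

end

/-!
Count the students a college holds above each rank threshold. The responsive order `ν ≿ μ` makes
these counts pointwise larger under `ν`, and equal counts force equal matchings, so it suffices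
that along the iteration of `T` from `μ'` the counts stay below those of `μ''`. By opposition of
interests with the stable `μ''`, a step keeps this as soon as every student it matches prefers
her college to her `μ''`-college. For a student left in place this holds because, by the counts,
she would otherwise block the current matching with her `μ''`-college, which envy-freeness
forbids for a matched student; for the admitted student, because the pair `T` satisfies is
student-maximal.
-/

namespace Market

open Finset

variable {n m : ℕ} {M : Market n m}

section Preferences

lemma sPref_of_not_sPref {i : Fin n} {a b : Option (Fin m)} (h : ¬ M.sPref i a b) (hne : a ≠ b) :
    M.sPref i b a :=
  lt_of_le_of_ne (not_lt.mp h) fun e => hne (M.sRank_inj i e).symm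

lemma cPref_of_not_cPref {j : Fin m} {a b : Option (Fin n)} (h : ¬ M.cPref j a b) (hne : a ≠ b) :
    M.cPref j b a :=
  lt_of_le_of_ne (not_lt.mp h) fun e => hne (M.cRank_inj j e).symm

@[simp]
lemma mem_assigned {μ : Fin n → Option (Fin m)} {j : Fin m} {i : Fin n} :
    i ∈ M.assigned μ j ↔ μ i = some j := by
  simp [assigned]

lemma eq_of_assigned_eq {μ ν : Fin n → Option (Fin m)}
    (h : ∀ j, M.assigned μ j = M.assigned ν j) : μ = ν := by
  funext i
  cases hμ : μ i with
  | none =>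
    cases hν : ν i with
    | none => rfl
    | some j => simpa [hμ, hν] using (Finset.ext_iff.mp (h j) i)
  | some j => exact (mem_assigned.mp (h j ▸ mem_assigned.mpr hμ)).symm

lemma IndRational.cPref_none {μ : Fin n → Option (Fin m)} (h : M.IndRational μ) {i : Fin n}
    {j : Fin m} (hi : μ i = some j) : M.cPref j (some i) none :=
  cPref_of_not_cPref (h.2 j i hi) (by simp)

end Preferences

section Counting

def countAbove (M : Market n m) (j : Fin m) (S : Finset (Fin n)) (r : ℕ) : ℕ :=
  #{i ∈ S | M.cRank j (some i) < r}

def CountLE (M : Market n m) (μ ν : Fin n → Option (Fin m)) : Prop :=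
  ∀ j r, M.countAbove j (M.assigned μ j) r ≤ M.countAbove j (M.assigned ν j) r

variable {j : Fin m}

lemma countAbove_mono {S S' : Finset (Fin n)} (h : S ⊆ S') (r : ℕ) :
    M.countAbove j S r ≤ M.countAbove j S' r :=
  card_le_card (filter_subset_filter _ h)

lemma countAbove_le_card (S : Finset (Fin n)) (r : ℕ) : M.countAbove j S r ≤ S.card :=
  card_le_card (filter_subset _ _)

lemma countAbove_eq_card {S : Finset (Fin n)} {r : ℕ} (h : ∀ i ∈ S, M.cRank j (some i) < r) :
    M.countAbove j S r = S.card := by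
  rw [countAbove, filter_true_of_mem h]

lemma countAbove_rank_lt_card {S : Finset (Fin n)} {i : Fin n} (hi : i ∈ S) :
    M.countAbove j S (M.cRank j (some i)) < S.card :=
  card_lt_card (filter_ssubset.mpr ⟨i, hi, lt_irrefl _⟩)

lemma countAbove_rank_succ (S : Finset (Fin n)) (i : Fin n) :
    M.countAbove j S (M.cRank j (some i) + 1) =
      M.countAbove j S (M.cRank j (some i)) + if i ∈ S then 1 else 0 := by
  have hsplit : ∀ i', M.cRank j (some i') < M.cRank j (some i) + 1 ↔
      M.cRank j (some i') < M.cRank j (some i) ∨ i' = i := fun i' => by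
    rw [Nat.lt_succ_iff, le_iff_lt_or_eq, (M.cRank_inj j).eq_iff, Option.some_inj]
  simp only [countAbove, hsplit, filter_or]
  rw [card_union_of_disjoint (disjoint_filter.mpr fun i' _ h e => (e ▸ h).false), filter_eq']
  split_ifs <;> simp

lemma eq_of_countAbove_eq {A B : Finset (Fin n)}
    (h : ∀ r, M.countAbove j A r = M.countAbove j B r) : A = B := by
  ext i
  have := h (M.cRank j (some i) + 1)
  rw [countAbove_rank_succ, countAbove_rank_succ, h] at this
  by_cases hA : i ∈ A <;> by_cases hB : i ∈ B <;> simp_all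

lemma countAbove_insert {S : Finset (Fin n)} {i : Fin n} (hi : i ∉ S) (r : ℕ) :
    M.countAbove j (insert i S) r =
      M.countAbove j S r + if M.cRank j (some i) < r then 1 else 0 := by
  rw [countAbove, filter_insert]
  split_ifs with h
  · exact card_insert_of_notMem fun h' => hi (mem_filter.mp h').1
  · rfl

lemma SwapImproves.countAbove_le {A B : Finset (Fin n)} (h : M.SwapImproves j A B) (r : ℕ) :
    M.countAbove j B r ≤ M.countAbove j A r := by
  rcases h with ⟨i₁, -, rfl, -⟩ | ⟨i₁, i₂, hi₂, hi₁, rfl, hlt⟩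
  · exact countAbove_mono (subset_insert _ _) r
  · have hi₁' : i₁ ∉ B.erase i₂ := fun h => hi₁ (mem_of_mem_erase h)
    conv_lhs => rw [← insert_erase hi₂]
    rw [countAbove_insert (notMem_erase i₂ B), countAbove_insert hi₁']
    unfold cPref at hlt
    split_ifs <;> omega

lemma SetPref.countAbove_le {A B : Finset (Fin n)} (h : M.SetPref j A B) (r : ℕ) :
    M.countAbove j B r ≤ M.countAbove j A r := by
  induction h with
  | single h => exact h.countAbove_le r
  | tail _ h ih => exact (h.countAbove_le r).trans ih

lemma CollegesWeakPref.countLE {μ ν : Fin n → Option (Fin m)} (h : M.CollegesWeakPref ν μ) :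
    M.CountLE μ ν := fun j r => by
  rcases h j with h | h
  · rw [h]
  · exact h.countAbove_le r

lemma CountLE.antisymm {μ ν : Fin n → Option (Fin m)} (h₁ : M.CountLE μ ν)
    (h₂ : M.CountLE ν μ) : μ = ν :=
  eq_of_assigned_eq fun j => eq_of_countAbove_eq fun r => (h₁ j r).antisymm (h₂ j r)

end Counting

section Stability

variable {μ ν : Fin n → Option (Fin m)} {i : Fin n} {j : Fin m}

lemma full_of_not_blocks (hM : M.IsMatching μ) (hnb : ¬ M.Blocks μ i j)
    (hpref : M.sPref i (some j) (μ i)) (hacc : M.cPref j (some i) none) (hij : μ i ≠ some j) :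
    (M.assigned μ j).card = M.quota j ∧
      ∀ i' ∈ M.assigned μ j, M.cPref j (some i') (some i) := by
  have hfull : (M.assigned μ j).card = M.quota j :=
    (hM j).antisymm (not_lt.mp fun h => hnb ⟨hpref, Or.inl ⟨h, hacc⟩⟩)
  refine ⟨hfull, fun i' hi' =>
    cPref_of_not_cPref (fun h => hnb ⟨hpref, Or.inr ⟨hfull, i', hi', h⟩⟩) ?_⟩
  rintro ⟨⟩
  exact hij (mem_assigned.mp hi')

/-- Otherwise `j` is full under `μ` of students it prefers to `i`, so `ν`, which also gives `j`
the student `i`, has fewer students than `μ` above `i`'s rank at `j`. -/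
lemma blocks_of_countLE (hM : M.IsMatching μ) (hN : M.IsMatching ν) (hle : M.CountLE μ ν)
    (hν : ν i = some j) (hacc : M.cPref j (some i) none) (hμ : μ i ≠ some j)
    (hpref : M.sPref i (some j) (μ i)) : M.Blocks μ i j := by
  by_contra hnb
  obtain ⟨hfull, hbetter⟩ := full_of_not_blocks hM hnb hpref hacc hμ
  have hcount := hle j (M.cRank j (some i))
  rw [countAbove_eq_card hbetter, hfull] at hcount
  have := countAbove_rank_lt_card (M := M) (j := j) (mem_assigned.mpr hν : i ∈ M.assigned ν j)
  have := hN j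
  omega

lemma EnvyFree.sPref_of_countLE (hEF : M.EnvyFree μ) (hM : M.IsMatching μ) (hN : M.IsMatching ν)
    (hst : M.Stable ν) (hle : M.CountLE μ ν) (hμ : μ i = some j) (hν : ν i ≠ some j) :
    M.sPref i (some j) (ν i) := by
  by_contra h
  have h' := sPref_of_not_sPref h (Ne.symm hν)
  cases hc : ν i with
  | none => exact hEF.1.1 i (hμ ▸ hc ▸ h')
  | some c =>
    have hb : M.Blocks μ i c := blocks_of_countLE hM hN hle hc (hst.1.cPref_none hc)
      (fun e => hν (hc.trans (hμ.symm.trans e).symm)) (hμ ▸ hc ▸ h')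
    simp [hEF.2 i c hb] at hμ

/-- Opposition of interests: a student `i` at `j` under `ν` but not under `μ` prefers `j`, so, as
`μ` is stable, `j` is full under `μ` of students it ranks above `i`. -/
lemma countLE_of_forall_sPref (hN : M.IsMatching ν) (hIR : M.IndRational ν)
    (hM : M.IsMatching μ) (hst : M.Stable μ)
    (hpref : ∀ i j, ν i = some j → μ i ≠ some j → M.sPref i (some j) (μ i)) :
    M.CountLE ν μ := by
  intro j r
  by_cases hsub : ∀ i ∈ M.assigned ν j, M.cRank j (some i) < r → i ∈ M.assigned μ j
  · exact card_le_card fun i hi => by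
      rw [mem_filter] at hi ⊢
      exact ⟨hsub i hi.1 hi.2, hi.2⟩
  push Not at hsub
  obtain ⟨i, hi, hir, hiμ⟩ := hsub
  rw [mem_assigned] at hi hiμ
  obtain ⟨hfull, hbetter⟩ :=
    full_of_not_blocks hM (hst.2 i j) (hpref i j hi hiμ) (hIR.cPref_none hi) hiμ
  rw [countAbove_eq_card fun i' hi' => (hbetter i' hi').trans hir, hfull]
  exact (countAbove_le_card _ r).trans (hN j)

end Stability

section Step

/-- The college half of `Blocks`. -/
def Wants (M : Market n m) (j : Fin m) (S : Finset (Fin n)) (i : Fin n) : Prop :=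
  (S.card < M.quota j ∧ M.cPref j (some i) none) ∨
    (S.card = M.quota j ∧ ∃ i' ∈ S, M.cPref j (some i) (some i'))

variable {μ ν : Fin n → Option (Fin m)} {i : Fin n} {j : Fin m}

lemma SwapImproves.wants {A B : Finset (Fin n)} (h : M.SwapImproves j A B)
    (hA : A.card ≤ M.quota j) (hacc : ∀ a ∈ A, M.cPref j (some a) none) {x : Fin n}
    (hx : M.Wants j A x) : M.Wants j B x := by
  unfold Wants at hx ⊢
  rcases h with ⟨i₁, hi₁, rfl, -⟩ | ⟨i₁, i₂, hi₂, hi₁, rfl, hlt⟩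
  · rw [card_insert_of_notMem hi₁] at hA hx
    refine Or.inl ⟨by omega, ?_⟩
    rcases hx with ⟨-, hx⟩ | ⟨-, a, ha, hxa⟩
    · exact hx
    · exact lt_trans hxa (hacc a ha)
  · have hcard : (insert i₁ (B.erase i₂)).card = B.card := by
      rw [card_insert_of_notMem fun h => hi₁ (mem_of_mem_erase h), card_erase_add_one hi₂]
    rw [hcard] at hx
    rcases hx with hx | ⟨hq, a, ha, hxa⟩
    · exact Or.inl hx
    rcases mem_insert.mp ha with rfl | ha
    · exact Or.inr ⟨hq, i₂, hi₂, lt_trans hxa hlt⟩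
    · exact Or.inr ⟨hq, a, mem_of_mem_erase ha, hxa⟩

lemma Blocks.cPref_none (hb : M.Blocks μ i j) (hIR : M.IndRational μ) :
    M.cPref j (some i) none := by
  rcases hb.2 with ⟨-, h⟩ | ⟨-, i', hi', h⟩
  · exact h
  · exact lt_trans h (hIR.cPref_none (mem_assigned.mp hi'))

lemma OneEnvyFree.eq_of_blocks (h : M.OneEnvyFree μ) (hb : M.Blocks μ i j) {i' : Fin n}
    {c : Fin m} (hb' : M.Blocks μ i' c) : i' = i := by
  rcases h.2 with hst | ⟨k, hk, -⟩
  · exact absurd hb (hst.2 i j)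
  · exact (hk i' c hb').trans (hk i j hb).symm

lemma oneEnvyFree_of_blocks {d : Fin n} (hIR : M.IndRational ν)
    (h : ∀ i c, M.Blocks ν i c → i = d ∧ ν i = none) : M.OneEnvyFree ν := by
  refine ⟨⟨hIR, fun i c hb => (h i c hb).2⟩, ?_⟩
  by_cases hex : ∃ i c, M.Blocks ν i c
  · obtain ⟨i, c, hb⟩ := hex
    exact Or.inr ⟨d, fun i c hb => (h i c hb).1,
      fun d' hd' => (hd' i c hb).symm.trans (h i c hb).1⟩
  · exact Or.inl ⟨hIR, fun i c hb => hex ⟨i, c, hb⟩⟩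

/-- The shape of the step of `T` that satisfies the blocking pair `(i, j)`. -/
structure SatisfiesPair (M : Market n m) (μ ν : Fin n → Option (Fin m)) (i : Fin n)
    (j : Fin m) : Prop where
  unmatched : μ i = none
  admitted : ν i = some j
  dropped : ∃ d, ∀ i', i' ≠ i → ν i' ≠ μ i' → i' = d ∧ μ i' = some j ∧ ν i' = none
  swapImproves : M.SwapImproves j (M.assigned ν j) (M.assigned μ j)
  card_le : (M.assigned ν j).card ≤ M.quota j

namespace SatisfiesPair

lemma eq_or_dropped (h : M.SatisfiesPair μ ν i j) {i' : Fin n} (hi' : i' ≠ i) :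
    ν i' = μ i' ∨ (μ i' = some j ∧ ν i' = none) := by
  obtain ⟨d, hd⟩ := h.dropped
  by_cases he : ν i' = μ i'
  · exact Or.inl he
  · exact Or.inr (hd i' hi' he).2

lemma assigned_of_ne (h : M.SatisfiesPair μ ν i j) {c : Fin m} (hc : c ≠ j) :
    M.assigned ν c = M.assigned μ c := by
  ext i'
  simp only [mem_assigned]
  rcases eq_or_ne i' i with rfl | hi'
  · simp [h.admitted, h.unmatched, hc.symm]
  · rcases h.eq_or_dropped hi' with he | ⟨hμ, hν⟩
    · rw [he]
    · simp [hμ, hν, hc.symm]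

lemma isMatching (h : M.SatisfiesPair μ ν i j) (hM : M.IsMatching μ) : M.IsMatching ν := by
  intro c
  by_cases hc : c = j
  · exact hc ▸ h.card_le
  · exact h.assigned_of_ne hc ▸ hM c

lemma indRational (h : M.SatisfiesPair μ ν i j) (hIR : M.IndRational μ) (hb : M.Blocks μ i j) :
    M.IndRational ν := by
  refine ⟨fun i' => ?_, fun c i' hi' => ?_⟩
  · rcases eq_or_ne i' i with rfl | hi'
    · rw [h.admitted]
      exact lt_asymm (h.unmatched ▸ hb.1)
    · rcases h.eq_or_dropped hi' with he | ⟨-, hν⟩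
      · exact he ▸ hIR.1 i'
      · exact hν ▸ lt_irrefl _
  · rcases eq_or_ne i' i with rfl | hi''
    · obtain rfl : c = j := Option.some.inj (hi'.symm.trans h.admitted)
      exact lt_asymm (hb.cPref_none hIR)
    · rcases h.eq_or_dropped hi'' with he | ⟨-, hν⟩
      · exact hIR.2 c i' (he ▸ hi')
      · simp [hν] at hi'

lemma blocks (h : M.SatisfiesPair μ ν i j) (hIR : M.IndRational μ)
    (hmax : M.StudentMaxBlock μ i j)
    (honly : ∀ i' c, M.Blocks μ i' c → i' = i) {i' : Fin n} {c : Fin m}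
    (hb : M.Blocks ν i' c) : i' ≠ i ∧ ν i' ≠ μ i' := by
  rcases eq_or_ne i' i with rfl | hi'
  · exfalso
    have hpref : M.sRank i' (some c) < M.sRank i' (some j) := h.admitted ▸ hb.1
    have hc : c ≠ j := by
      rintro rfl
      exact lt_irrefl _ hpref
    have hbμ : M.Blocks μ i' c :=
      ⟨h.unmatched ▸ lt_trans hpref (h.unmatched ▸ hmax.1.1), h.assigned_of_ne hc ▸ hb.2⟩
    exact absurd (hmax.2 c hbμ) (not_le.mpr hpref)
  refine ⟨hi', fun he => hi' (honly i' c ⟨he ▸ hb.1, ?_⟩)⟩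
  by_cases hc : c = j
  · subst hc
    exact h.swapImproves.wants h.card_le
      (fun a ha => (h.indRational hIR hmax.1).cPref_none (mem_assigned.mp ha)) hb.2
  · exact h.assigned_of_ne hc ▸ hb.2

lemma oneEnvyFree (h : M.SatisfiesPair μ ν i j) (hEF : M.OneEnvyFree μ)
    (hmax : M.StudentMaxBlock μ i j) : M.OneEnvyFree ν := by
  obtain ⟨d, hd⟩ := h.dropped
  refine oneEnvyFree_of_blocks (d := d) (h.indRational hEF.1.1 hmax.1) fun i' c hb => ?_
  obtain ⟨hi', hne⟩ := h.blocks hEF.1.1 hmax (fun _ _ hb' => hEF.eq_of_blocks hmax.1 hb') hb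
  obtain ⟨rfl, -, hν⟩ := hd i' hi' hne
  exact ⟨rfl, hν⟩

lemma countLE {μ'' : Fin n → Option (Fin m)} (h : M.SatisfiesPair μ ν i j)
    (hM : M.IsMatching μ) (hEF : M.EnvyFree μ)
    (hmax : M.StudentMaxBlock μ i j) (hM'' : M.IsMatching μ'') (hst'' : M.Stable μ'')
    (hle : M.CountLE μ μ'') : M.CountLE ν μ'' := by
  refine countLE_of_forall_sPref (h.isMatching hM) (h.indRational hEF.1 hmax.1) hM'' hst''
    fun i' c hν hne => ?_
  rcases eq_or_ne i' i with rfl | hi'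
  · obtain rfl : c = j := Option.some.inj (hν.symm.trans h.admitted)
    by_contra hn
    have hworse := sPref_of_not_sPref hn (Ne.symm hne)
    have hij : M.sPref i' (some c) none := h.unmatched ▸ hmax.1.1
    cases hc : μ'' i' with
    | none => exact lt_asymm hij (hc ▸ hworse)
    | some c' =>
      rw [hc] at hworse
      have hb := blocks_of_countLE hM hM'' hle hc (hst''.1.cPref_none hc)
        (by simp [h.unmatched]) (h.unmatched ▸ lt_trans hworse hij)
      exact absurd (hmax.2 c' hb) (not_le.mpr hworse)
  · rcases h.eq_or_dropped hi' with he | ⟨-, hnone⟩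
    · exact hEF.sPref_of_countLE hM hM'' hst'' hle (he ▸ hν) hne
    · simp [hnone] at hν

end SatisfiesPair

end Step

section Restabilization

variable {μ : Fin n → Option (Fin m)} {i : Fin n}

lemma exists_studentMaxBlock {j₀ : Fin m} (hb : M.Blocks μ i j₀) :
    ∃ j, M.StudentMaxBlock μ i j := by
  obtain ⟨j, hj, hmin⟩ := exists_min_image {j | M.Blocks μ i j} (fun j => M.sRank i (some j))
    ⟨j₀, mem_filter.mpr ⟨mem_univ _, hb⟩⟩
  exact ⟨j, (mem_filter.mp hj).2, fun j' hb' => hmin j' (mem_filter.mpr ⟨mem_univ _, hb'⟩)⟩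

variable {T : (Fin n → Option (Fin m)) → Fin n → Option (Fin m)} {j : Fin m}

lemma IsTStep.satisfiesPair_of_lt_quota (hT : M.IsTStep T) (hM : M.IsMatching μ)
    (hEF : M.OneEnvyFree μ) (hmax : M.StudentMaxBlock μ i j)
    (hlt : (M.assigned μ j).card < M.quota j) (hacc : M.cPref j (some i) none) :
    M.SatisfiesPair μ (T μ) i j := by
  obtain ⟨hadm, hrest⟩ := (hT μ hM hEF).2 i j hmax
  have hi : μ i = none := hEF.1.2 i j hmax.1
  have hiS : i ∉ M.assigned μ j := by simp [hi]
  have hkeep : ∀ i', i' ≠ i → T μ i' = μ i' := fun i' hi' => by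
    by_cases hj : μ i' = some j
    · exact ((hrest i' hi').2 hj).1 hlt
    · exact (hrest i' hi').1 hj
  have hA : M.assigned (T μ) j = insert i (M.assigned μ j) := by
    ext i'
    rcases eq_or_ne i' i with rfl | hi'
    · simp [hadm]
    · simp [hkeep i' hi', hi']
  refine ⟨hi, hadm, ⟨i, fun i' hi' hne => absurd (hkeep i' hi') hne⟩,
    Or.inl ⟨i, hiS, hA, hacc⟩, ?_⟩
  rw [hA, card_insert_of_notMem hiS]
  exact hlt

lemma IsTStep.satisfiesPair_of_eq_quota (hT : M.IsTStep T) (hM : M.IsMatching μ)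
    (hEF : M.OneEnvyFree μ) (hmax : M.StudentMaxBlock μ i j)
    (hfull : (M.assigned μ j).card = M.quota j) {i₀ : Fin n} (hi₀ : i₀ ∈ M.assigned μ j)
    (hii₀ : M.cPref j (some i) (some i₀)) : M.SatisfiesPair μ (T μ) i j := by
  obtain ⟨hadm, hrest⟩ := (hT μ hM hEF).2 i j hmax
  have hi : μ i = none := hEF.1.2 i j hmax.1
  have hiS : i ∉ M.assigned μ j := by simp [hi]
  obtain ⟨d, hd, hdworst⟩ :=
    exists_max_image (M.assigned μ j) (fun i' => M.cRank j (some i')) ⟨i₀, hi₀⟩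
  have hbetter : ∀ i' ∈ M.assigned μ j, i' ≠ d → M.cPref j (some i') (some d) :=
    fun i' hi' hne =>
      lt_of_le_of_ne (hdworst i' hi') fun e => hne (by simpa using M.cRank_inj j e)
  have hdi : d ≠ i := by
    rintro rfl
    exact hiS hd
  have hdrop : T μ d = none := (((hrest d hdi).2 (mem_assigned.mp hd)).2 hfull).2 hbetter
  have hkeep : ∀ i', i' ≠ i → i' ≠ d → T μ i' = μ i' := fun i' hi' hid => by
    by_cases hj : μ i' = some j
    · exact (((hrest i' hi').2 hj).2 hfull).1 ⟨d, hd, hbetter i' (mem_assigned.mpr hj) hid⟩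
    · exact (hrest i' hi').1 hj
  have hA : M.assigned (T μ) j = insert i ((M.assigned μ j).erase d) := by
    ext i'
    rcases eq_or_ne i' i with rfl | hi'
    · simp [hadm]
    rcases eq_or_ne i' d with rfl | hid
    · simp [hdrop, hdi]
    · simp [hkeep i' hi' hid, hi', hid]
  refine ⟨hi, hadm, ⟨d, fun i' hi' hne => ?_⟩,
    Or.inr ⟨i, d, hd, hiS, hA, lt_of_lt_of_le hii₀ (hdworst i₀ hi₀)⟩, ?_⟩
  · obtain rfl : i' = d := by_contra fun hid => hne (hkeep i' hi' hid)
    exact ⟨rfl, mem_assigned.mp hd, hdrop⟩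
  · rw [hA, card_insert_of_notMem fun h => hiS (mem_of_mem_erase h), card_erase_add_one hd,
      hfull]

lemma IsTStep.satisfiesPair (hT : M.IsTStep T) (hM : M.IsMatching μ) (hEF : M.OneEnvyFree μ)
    (hmax : M.StudentMaxBlock μ i j) : M.SatisfiesPair μ (T μ) i j := by
  rcases hmax.1.2 with ⟨hlt, hacc⟩ | ⟨hfull, i₀, hi₀, hii₀⟩
  · exact hT.satisfiesPair_of_lt_quota hM hEF hmax hlt hacc
  · exact hT.satisfiesPair_of_eq_quota hM hEF hmax hfull hi₀ hii₀

lemma IsTStep.preserves {μ'' : Fin n → Option (Fin m)} (hT : M.IsTStep T) (hM : M.IsMatching μ)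
    (hEF : M.OneEnvyFree μ) (hM'' : M.IsMatching μ'') (hst'' : M.Stable μ'')
    (hle : M.CountLE μ μ'') :
    M.IsMatching (T μ) ∧ M.OneEnvyFree (T μ) ∧ M.CountLE (T μ) μ'' := by
  by_cases hex : ∃ i j, M.Blocks μ i j
  · obtain ⟨i, j₀, hb⟩ := hex
    obtain ⟨j, hmax⟩ := exists_studentMaxBlock hb
    have h := hT.satisfiesPair hM hEF hmax
    exact ⟨h.isMatching hM, h.oneEnvyFree hEF hmax, h.countLE hM hEF.1 hmax hM'' hst'' hle⟩
  · rw [(hT μ hM hEF).1 fun i j hb => hex ⟨i, j, hb⟩]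
    exact ⟨hM, hEF, hle⟩

lemma IsTStep.iterate {μ'' : Fin n → Option (Fin m)} (hT : M.IsTStep T) (hM : M.IsMatching μ)
    (hEF : M.OneEnvyFree μ) (hM'' : M.IsMatching μ'') (hst'' : M.Stable μ'')
    (hle : M.CountLE μ μ'') (k : ℕ) :
    M.IsMatching (T^[k] μ) ∧ M.OneEnvyFree (T^[k] μ) ∧ M.CountLE (T^[k] μ) μ'' := by
  induction k with
  | zero => exact ⟨hM, hEF, hle⟩
  | succ k ih =>
    rw [Function.iterate_succ_apply']
    exact hT.preserves ih.1 ih.2.1 hM'' hst'' ih.2.2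

end Restabilization

end Market

theorem Tstar_college_worst_above_general {n m : ℕ} (M : Market n m)
    (T Tstar : (Fin n → Option (Fin m)) → Fin n → Option (Fin m))
    (hT : M.IsTStep T) (hTs : M.IsTStarOf T Tstar)
    (μ' : Fin n → Option (Fin m))
    (hμ' : M.IsMatching μ') (h1 : M.OneEnvyFree μ') :
    ∀ μ'' : Fin n → Option (Fin m), M.IsMatching μ'' → M.Stable μ'' →
      μ'' ≠ Tstar μ' →
      ¬ (M.CollegesWeakPref (Tstar μ') μ'' ∧ M.CollegesWeakPref μ'' μ') := by
  rintro μ'' hM'' hst'' hne ⟨hTsμ'', hμ''μ'⟩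
  obtain ⟨r, hr, -⟩ := hTs μ' hμ' h1
  have hle : M.CountLE (Tstar μ') μ'' :=
    hr ▸ (hT.iterate hμ' h1 hM'' hst'' hμ''μ'.countLE r).2.2
  exact hne (hle.antisymm hTsμ''.countLE).symm

/-- `T*(μ')` is the college-worst stable matching weakly preferred
by all colleges to the 1-envy-free matching `μ'`: no other stable matching
`μ''` satisfies `T*(μ') ≿ μ'' ≿ μ'`. -/
theorem Tstar_college_worst_above {n m : ℕ} (M : Market n m)
    (T Tstar : (Fin n → Option (Fin m)) → Fin n → Option (Fin m))
    (hT : M.IsTStep T) (hTs : M.IsTStarOf T Tstar)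
    (μ' : Fin n → Option (Fin m))
    (hμ' : M.IsMatching μ') (h1 : M.OneEnvyFree μ')
    (hstable : M.Stable (Tstar μ')) :
    ∀ μ'' : Fin n → Option (Fin m), M.IsMatching μ'' → M.Stable μ'' →
      μ'' ≠ Tstar μ' →
      ¬ (M.CollegesWeakPref (Tstar μ') μ'' ∧ M.CollegesWeakPref μ'' μ') :=
  Tstar_college_worst_above_general M T Tstar hT hTs μ' hμ' h1
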